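/- For all n, k, d ∈ ℕ and any two sparse inputs (idx, val) and (idx', val') with idx ≠ idx' as functions Fin (n·k) → Fin d, the traces of the Linear algorithm on the two inputs are distinct lists; consequently, the two Dirac probability measures μ, ν on the (discrete) type of traces concentrated at the two executions' traces satisfy ⨆_{A} |μ(A) − ν(A)| = 1, i.e., the statistical distance between the two access-pattern distributions is 1, so the Linear algorithm on sparse gradients is not δ-statistically oblivious for any δ < 1. -/

import Mathlib

open MeasureTheory

/-- The two arrays appearing in the Linear aggregation algorithm. -/
inductive Tag : Type
  | G
  | Gstar
deriving DecidableEq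

/-- A memory operation: read or write. -/
inductive Op : Type
  | read
  | write
deriving DecidableEq

/-- A memory access: a cell (array tag together with a position) and an operation. -/
abbrev Access : Type := (Tag × ℕ) × Op

/-- A trace (memory access pattern) is a finite list of memory accesses. -/
abbrev Trace : Type := List Access

/-- Traces form a discrete measurable space. -/
instance : MeasurableSpace Trace := ⊤

/-- One step of the Linear algorithm on sparse gradients: for `t ∈ Fin (n·k)`,
emit the accesses `[(G, t, read), (G⋆, idx t, read), (G⋆, idx t, write)]` and
update `G⋆[idx t] := G⋆[idx t] + val t`. -/
def sparseStep {n k d : ℕ} (idx : Fin (n * k) → Fin d) (val : Fin (n * k) → ℝ)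
    (s : (Fin d → ℝ) × Trace) (t : Fin (n * k)) : (Fin d → ℝ) × Trace :=
  (Function.update s.1 (idx t) (s.1 (idx t) + val t),
   s.2 ++ [((Tag.G, (t : ℕ)), Op.read),
           ((Tag.Gstar, ((idx t) : ℕ)), Op.read),
           ((Tag.Gstar, ((idx t) : ℕ)), Op.write)])

/-- Running the Linear algorithm on sparse input `(idx, val)`, starting from
`G⋆ = 0` and the empty trace. -/
def sparseRun {n k d : ℕ} (idx : Fin (n * k) → Fin d) (val : Fin (n * k) → ℝ) :
    (Fin d → ℝ) × Trace :=
  List.foldl (sparseStep idx val) ((0 : Fin d → ℝ), ([] : Trace)) (List.finRange (n * k))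

/-- The trace of the Linear algorithm on sparse input `(idx, val)`. -/
def sparseTrace {n k d : ℕ} (idx : Fin (n * k) → Fin d) (val : Fin (n * k) → ℝ) : Trace :=
  (sparseRun idx val).2

/-!
The write accesses of the trace record the positions `idx 0, idx 1, …` in order and nothing else, so
the trace determines `idx`. Two Dirac measures at distinct points are separated by a singleton, on
which their masses are `1` and `0`.
-/

theorem abs_measureReal_sub_measureReal_le_one {α : Type*} [MeasurableSpace α] (μ ν : Measure α)
    [IsProbabilityMeasure μ] [IsProbabilityMeasure ν] (A : Set α) :
    |μ.real A - ν.real A| ≤ 1 :=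
  abs_sub_le_of_nonneg_of_le measureReal_nonneg measureReal_le_one
    measureReal_nonneg measureReal_le_one

theorem iSup_abs_dirac_sub_dirac {α : Type*} [MeasurableSpace α] [MeasurableSingletonClass α]
    {x y : α} (hxy : x ≠ y) :
    ⨆ A : Set α, |(Measure.dirac x A).toReal - (Measure.dirac y A).toReal| = 1 := by
  have hbdd : BddAbove (Set.range fun A : Set α =>
      |(Measure.dirac x A).toReal - (Measure.dirac y A).toReal|) := by
    refine ⟨1, ?_⟩
    rintro _ ⟨A, rfl⟩
    exact abs_measureReal_sub_measureReal_le_one _ _ A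
  refine le_antisymm (ciSup_le fun A => abs_measureReal_sub_measureReal_le_one _ _ A) ?_
  refine le_ciSup_of_le hbdd {x} (le_of_eq ?_)
  simp [Set.indicator, hxy.symm]

instance : DiscreteMeasurableSpace Trace := ⟨fun _ => trivial⟩

def sparseStepAccesses {n k d : ℕ} (idx : Fin (n * k) → Fin d) (t : Fin (n * k)) : Trace :=
  [((Tag.G, (t : ℕ)), Op.read),
   ((Tag.Gstar, ((idx t) : ℕ)), Op.read),
   ((Tag.Gstar, ((idx t) : ℕ)), Op.write)]

theorem foldl_sparseStep_snd {n k d : ℕ} (idx : Fin (n * k) → Fin d) (val : Fin (n * k) → ℝ)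
    (l : List (Fin (n * k))) (s : (Fin d → ℝ) × Trace) :
    (l.foldl (sparseStep idx val) s).2 = s.2 ++ l.flatMap (sparseStepAccesses idx) := by
  induction l generalizing s with
  | nil => simp
  | cons t l ih => simp [ih, sparseStep, sparseStepAccesses]

theorem sparseTrace_eq_flatMap {n k d : ℕ} (idx : Fin (n * k) → Fin d) (val : Fin (n * k) → ℝ) :
    sparseTrace idx val = (List.finRange (n * k)).flatMap (sparseStepAccesses idx) := by
  simp [sparseTrace, sparseRun, foldl_sparseStep_snd]

def writePositions (τ : Trace) : List ℕ :=
  τ.filterMap fun a => if a.2 = Op.write then some a.1.2 else none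

theorem writePositions_sparseTrace {n k d : ℕ} (idx : Fin (n * k) → Fin d)
    (val : Fin (n * k) → ℝ) :
    writePositions (sparseTrace idx val) = (List.finRange (n * k)).map fun t => (idx t : ℕ) := by
  simp [writePositions, sparseTrace_eq_flatMap, List.filterMap_flatMap, sparseStepAccesses,
    List.map_eq_flatMap]

theorem idx_eq_of_sparseTrace_eq {n k d : ℕ} {idx idx' : Fin (n * k) → Fin d}
    {val val' : Fin (n * k) → ℝ} (h : sparseTrace idx val = sparseTrace idx' val') :
    idx = idx' := by
  have hmap := congrArg writePositions h
  rw [writePositions_sparseTrace, writePositions_sparseTrace] at hmap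
  funext t
  exact Fin.val_injective (List.map_inj_left.mp hmap t (List.mem_finRange t))

/-- The Linear algorithm is **not** oblivious on sparse gradients: any two
inputs with different index sequences produce distinct traces, and the two
Dirac probability measures concentrated at these traces are at statistical
distance `⨆ A, |μ(A) − ν(A)| = 1`; hence the algorithm is not δ-statistically
oblivious for any `δ < 1`. -/
theorem linear_sparse_not_oblivious (n k d : ℕ)
    (idx idx' : Fin (n * k) → Fin d) (val val' : Fin (n * k) → ℝ)
    (h : idx ≠ idx') :
    sparseTrace idx val ≠ sparseTrace idx' val' ∧
      (⨆ A : Set Trace,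
        |((Measure.dirac (sparseTrace idx val)) A).toReal -
          ((Measure.dirac (sparseTrace idx' val')) A).toReal|) = 1 := by
  have hne : sparseTrace idx val ≠ sparseTrace idx' val' :=
    fun heq => h (idx_eq_of_sparseTrace_eq heq)
  exact ⟨hne, iSup_abs_dirac_sub_dirac hne⟩
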